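/- arXiv:1411.0457 — 8 statements merged into one kernel-verified Lean document; each statement's English description precedes it below -/
import Mathlib

section
/- Every chain-complete partial order satisfies the principle of open induction: if B is an open predicate (meaning that whenever B holds of the supremum of a non-empty chain, it holds of some element of the chain), and for every x, B(y) for all y > x implies B(x), then B holds of every element. -/
/-- Open induction: every chain-complete partial order satisfies open induction. -/
theorem open_induction_of_chain_complete {X : Type*} [PartialOrder X]
    (hcc : ∀ γ : Set X, IsChain (· ≤ ·) γ → γ.Nonempty → ∃ s, IsLUB γ s)
    (B : X → Prop)
    (hopen : ∀ γ : Set X, IsChain (· ≤ ·) γ → γ.Nonempty →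
      ∀ s, IsLUB γ s → B s → ∃ x ∈ γ, B x)
    (hind : ∀ x, (∀ y, x < y → B y) → B x) :
    ∀ x, B x := by
  intro x
  by_contra hx
  obtain ⟨m, hxm, hm, hmax⟩ := zorn_le_nonempty₀ {y | ¬ B y}
    (fun c hcs hc y hy => by
      obtain ⟨s, hs⟩ := hcc c hc ⟨y, hy⟩
      refine ⟨s, ?_, fun z hz => hs.1 hz⟩
      intro hBs
      obtain ⟨z, hzc, hBz⟩ := hopen c hc ⟨y, hy⟩ s hs hBs
      exact hcs hzc hBz) x hx
  exact hm (hind m fun y hy => by_contra fun hBy => hy.ne (le_antisymm hy.le (hmax hBy hy.le)))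
end

section
/- Let B(u) be a predicate on partial sequences of the form B(u) ≡ (∀n, n ∈ dom(u) → A(n,u)) → ∃n, P(u restricted to its first n values), where P is an arbitrary predicate and A is monotone in the sense that n ∈ dom(u), u ⊑ v and A(n,u) imply A(n,v). Then B is open with respect to the extension ordering ⊑ on partial sequences: if B holds of the supremum of a non-empty chain of partial sequences, then B holds of some element of the chain. -/
/-- Partial sequences: `u ⊑ v` iff `v` agrees with `u` on the domain of `u`. -/
def PExt {ρ : Type*} (u v : ℕ → Option ρ) : Prop := ∀ i, u i ≠ none → v i = u i

/-- Restriction of a partial sequence to indices `< n`. -/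
def restr {ρ : Type*} (u : ℕ → Option ρ) (n : ℕ) : ℕ → Option ρ :=
  fun i => if i < n then u i else none

/-- A predicate of the form `(∀ n ∈ dom u, A n u) → ∃ n, P (u↾n)` with `A` monotone
is open with respect to the extension ordering: if it holds of the supremum of a
non-empty chain, it holds of some element of the chain. -/
theorem openness_of_monotone_form {ρ : Type*}
    (A : ℕ → (ℕ → Option ρ) → Prop) (P : (ℕ → Option ρ) → Prop)
    (hmono : ∀ n u v, u n ≠ none → PExt u v → A n u → A n v)
    (γ : Set (ℕ → Option ρ)) (hchain : IsChain PExt γ) (hne : γ.Nonempty)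
    (v : ℕ → Option ρ)
    (hub : ∀ u ∈ γ, PExt u v)
    (hchar : ∀ n, v n ≠ none → ∃ u ∈ γ, u n ≠ none)
    (hBv : (∀ n, v n ≠ none → A n v) → ∃ n, P (restr v n)) :
    ∃ u ∈ γ, ((∀ n, u n ≠ none → A n u) → ∃ n, P (restr u n)) := by
  have hnone : ∀ u ∈ γ, ∀ i, v i = none → u i = none := by
    intro u huγ i hv
    by_contra h
    exact h (((hub u huγ i h).symm.trans hv))
  by_cases hA : ∀ n, v n ≠ none → A n v
  · obtain ⟨n, hP⟩ := hBv hA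
    have key : ∀ m, ∃ u ∈ γ, ∀ i < m, u i = v i := by
      intro m
      induction m with
      | zero =>
        obtain ⟨u, hu⟩ := hne
        exact ⟨u, hu, fun i h => absurd h (Nat.not_lt_zero i)⟩
      | succ m ih =>
        obtain ⟨u, huγ, hu⟩ := ih
        by_cases hv : v m = none
        · refine ⟨u, huγ, fun i hi => ?_⟩
          rcases Nat.lt_succ_iff_lt_or_eq.1 hi with h | rfl
          · exact hu i h
          · rw [hnone u huγ i hv, hv]
        · obtain ⟨w, hwγ, hw⟩ := hchar m hv
          rcases eq_or_ne u w with rfl | hne'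
          · refine ⟨u, huγ, fun i hi => ?_⟩
            rcases Nat.lt_succ_iff_lt_or_eq.1 hi with h | rfl
            · exact hu i h
            · exact (hub u huγ i hw).symm
          · rcases hchain huγ hwγ hne' with h | h
            · refine ⟨w, hwγ, fun i hi => ?_⟩
              rcases Nat.lt_succ_iff_lt_or_eq.1 hi with h' | rfl
              · by_cases hvi : v i = none
                · rw [hnone w hwγ i hvi, hvi]
                · rw [h i (by rw [hu i h']; exact hvi), hu i h']
              · exact (hub w hwγ i hw).symm
            · refine ⟨u, huγ, fun i hi => ?_⟩
              rcases Nat.lt_succ_iff_lt_or_eq.1 hi with h' | rfl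
              · exact hu i h'
              · have : u i ≠ none := by rw [h i hw]; exact hw
                exact (hub u huγ i this).symm
    obtain ⟨u, huγ, hu⟩ := key n
    refine ⟨u, huγ, fun _ => ⟨n, ?_⟩⟩
    have hrestr : restr u n = restr v n := by
      funext i
      simp only [restr]
      split
      · exact hu i ‹_›
      · rfl
    rwa [hrestr]
  · push_neg at hA
    obtain ⟨n, hvn, hAn⟩ := hA
    obtain ⟨u, huγ, hun⟩ := hchar n hvn
    exact ⟨u, huγ, fun h => absurd (hmono n u v hun (hub u huγ) (h n hun)) hAn⟩
end

section
/- The principle of backward induction for partial sequences is provable from dependent choice (via a minimal-bad-sequence style argument): for any open predicate B on partial sequences ℕ → Option ρ (open in the sense of having the syntactic form (∀n ∈ dom(u), A(n,u)) → ∃n, P(u↾n) with A monotone), if ∀u, (∀v ⊐ u, B(v)) → B(u), then ∀u, B(u). -/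
/-- Strict extension: `u ⊏ v`. -/
def PSExt {ρ : Type*} (u v : ℕ → Option ρ) : Prop :=
  PExt u v ∧ ∃ n, v n ≠ none ∧ u n = none

/-- Backward induction for open predicates of the syntactic form
`(∀ n ∈ dom u, A n u) → ∃ n, P (u↾n)` with `A` monotone (provable from
dependent choice via a minimal-bad-sequence argument). -/
theorem backward_induction {ρ : Type*}
    (A : ℕ → (ℕ → Option ρ) → Prop) (P : (ℕ → Option ρ) → Prop)
    (hmono : ∀ n u v, u n ≠ none → PExt u v → A n u → A n v)
    (hstep : ∀ u : ℕ → Option ρ,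
      (∀ v, PSExt u v → ((∀ n, v n ≠ none → A n v) → ∃ n, P (restr v n))) →
      ((∀ n, u n ≠ none → A n u) → ∃ n, P (restr u n))) :
    ∀ u : ℕ → Option ρ, (∀ n, u n ≠ none → A n u) → ∃ n, P (restr u n) := by
  classical
  intro u hA
  by_contra hP
  letI : Preorder (ℕ → Option ρ) :=
    { le := PExt
      le_refl := fun a i _ => rfl
      le_trans := fun a b c hab hbc i ha => by
        have h1 : b i = a i := hab i ha
        have h2 : c i = b i := hbc i (h1 ▸ ha)
        rw [h2, h1] }
  -- the set of "bad" sequences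
  set S : Set (ℕ → Option ρ) :=
    {v | (∀ n, v n ≠ none → A n v) ∧ ¬(∃ n, P (restr v n))} with hS
  have huS : u ∈ S := ⟨hA, hP⟩
  -- every nonempty chain in S has an upper bound in S
  have hchain : ∀ c ⊆ S, IsChain (· ≤ ·) c → ∀ y ∈ c, ∃ ub ∈ S, ∀ z ∈ c, z ≤ ub := by
    intro c hcS hc v₀ hv₀
    -- values agree across the chain
    have hagree : ∀ v ∈ c, ∀ v' ∈ c, ∀ i, v i ≠ none → v' i ≠ none → v i = v' i := by
      intro v hv v' hv' i hvi hv'i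
      rcases eq_or_ne v v' with rfl | hne
      · rfl
      · rcases hc hv hv' hne with h | h
        · exact (h i hvi).symm
        · exact h i hv'i
    -- the union of the chain
    set w : ℕ → Option ρ := fun i =>
      if h : ∃ v ∈ c, v i ≠ none then h.choose i else none with hw
    have hub : ∀ v ∈ c, PExt v w := by
      intro v hv i hvi
      have h : ∃ v ∈ c, v i ≠ none := ⟨v, hv, hvi⟩
      have : w i = h.choose i := by simp only [hw, dif_pos h]
      rw [this]
      exact hagree _ h.choose_spec.1 v hv i h.choose_spec.2 hvi
    have hwdom : ∀ i, w i ≠ none → ∃ v ∈ c, v i ≠ none ∧ v i = w i := by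
      intro i hwi
      by_cases h : ∃ v ∈ c, v i ≠ none
      · refine ⟨h.choose, h.choose_spec.1, h.choose_spec.2, ?_⟩
        exact (hub _ h.choose_spec.1 i h.choose_spec.2).symm
      · exact absurd (by simp only [hw, dif_neg h]) hwi
    refine ⟨w, ⟨?_, ?_⟩, hub⟩
    · -- hypothesis part of badness
      intro n hwn
      obtain ⟨v, hv, hvn, hveq⟩ := hwdom n hwn
      exact hmono n v w hvn (hub v hv) ((hcS hv).1 n hvn)
    · -- no P on restrictions
      rintro ⟨n, hPn⟩
      -- find an element of the chain covering all defined values below n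
      have key : ∀ m : ℕ, ∃ v ∈ c, ∀ i < m, w i ≠ none → v i ≠ none := by
        intro m
        induction m with
        | zero => exact ⟨v₀, hv₀, fun i hi => absurd hi (Nat.not_lt_zero i)⟩
        | succ m ih =>
          obtain ⟨v, hv, hvall⟩ := ih
          by_cases hwm : w m = none
          · refine ⟨v, hv, fun i hi hwi => ?_⟩
            rcases Nat.lt_succ_iff_lt_or_eq.mp hi with hi' | rfl
            · exact hvall i hi' hwi
            · exact absurd hwm hwi
          · obtain ⟨v', hv', hv'm, _⟩ := hwdom m hwm
            rcases eq_or_ne v v' with rfl | hne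
            · refine ⟨v, hv, fun i hi hwi => ?_⟩
              rcases Nat.lt_succ_iff_lt_or_eq.mp hi with hi' | rfl
              · exact hvall i hi' hwi
              · exact hv'm
            · rcases hc hv hv' hne with h | h
              · refine ⟨v', hv', fun i hi hwi => ?_⟩
                rcases Nat.lt_succ_iff_lt_or_eq.mp hi with hi' | rfl
                · have := h i (hvall i hi' hwi); rw [this]; exact hvall i hi' hwi
                · exact hv'm
              · refine ⟨v, hv, fun i hi hwi => ?_⟩
                rcases Nat.lt_succ_iff_lt_or_eq.mp hi with hi' | rfl
                · exact hvall i hi' hwi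
                · have := h i hv'm; rw [this]; exact hv'm
      obtain ⟨v, hv, hvall⟩ := key n
      have heq : restr v n = restr w n := by
        funext i
        simp only [restr]
        split
        · rename_i hi
          by_cases hwi : w i = none
          · rw [hwi]
            by_contra hvi
            have hwv : w i = v i := hub v hv i hvi
            exact hvi (hwv ▸ hwi)
          · have hvi := hvall i hi hwi
            exact (hub v hv i hvi).symm
        · rfl
      exact (hcS hv).2 ⟨n, heq ▸ hPn⟩
  obtain ⟨m, _, hmS, hmax⟩ := zorn_le_nonempty₀ S hchain u huS
  -- every strict extension of the maximal bad element is good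
  have hgood : ∀ v, PSExt m v → ((∀ n, v n ≠ none → A n v) → ∃ n, P (restr v n)) := by
    intro v ⟨hext, n, hvn, hmn⟩ hAv
    by_contra hPv
    have hvm : PExt v m := hmax ⟨hAv, hPv⟩ hext
    have h1 : m n = v n := hvm n hvn
    rw [h1] at hmn
    exact hvn hmn
  exact hmS.2 (hstep m hgood hmS.1)
end

section
/- Relativised backward induction follows from backward induction: let ⊲ be a decidable relation on ℕ, let D_⊲ be the set of partial sequences u whose domain is ⊲-closed (∀n ∈ dom(u), ∀i ⊲ n, i ∈ dom(u)), and let ⊏' be any relation on partial sequences with u ⊏' v → u ⊏ v. Then assuming backward induction (open induction over ⊑), for every open predicate B: if ∀u ∈ D_⊲, (∀v ⊐' u, v ∈ D_⊲ → B(v)) → B(u), then ∀u ∈ D_⊲, B(u). -/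
/-- `v` is the supremum of the chain `γ`. -/
def IsSupOf {ρ : Type*} (γ : Set (ℕ → Option ρ)) (v : ℕ → Option ρ) : Prop :=
  (∀ u ∈ γ, PExt u v) ∧ ∀ n, v n ≠ none → ∃ u ∈ γ, u n ≠ none

/-- Semantically open predicates on partial sequences. -/
def OpenPred {ρ : Type*} (B : (ℕ → Option ρ) → Prop) : Prop :=
  ∀ γ : Set (ℕ → Option ρ), IsChain PExt γ → γ.Nonempty →
    ∀ v, IsSupOf γ v → B v → ∃ u ∈ γ, B u

/-- The domain of `u` is closed under a relation `tri` on `ℕ`. -/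
def DClosed {ρ : Type*} (tri : ℕ → ℕ → Prop) (u : ℕ → Option ρ) : Prop :=
  ∀ n, u n ≠ none → ∀ i, tri i n → u i ≠ none

/-- Relativised backward induction follows from backward induction (open induction
over the extension ordering). -/
theorem relativised_backward_induction {ρ : Type*}
    (hBkI : ∀ B : (ℕ → Option ρ) → Prop, OpenPred B →
      (∀ u, (∀ v, PSExt u v → B v) → B u) → ∀ u, B u)
    (tri : ℕ → ℕ → Prop) [DecidableRel tri]
    (lt' : (ℕ → Option ρ) → (ℕ → Option ρ) → Prop)
    (hsub : ∀ u v, lt' u v → PSExt u v)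
    (B : (ℕ → Option ρ) → Prop) (hopen : OpenPred B)
    (hstep : ∀ u, DClosed tri u → (∀ v, lt' u v → DClosed tri v → B v) → B u) :
    ∀ u, DClosed tri u → B u := by
  have hopen' : OpenPred (fun u => DClosed tri u → B u) := by
    intro γ hchain hne v hsup hBv
    by_cases hall : ∀ u ∈ γ, DClosed tri u
    · have hDv : DClosed tri v := by
        intro n hn i hin
        obtain ⟨u, hu, hun⟩ := hsup.2 n hn
        have hui := hall u hu n hun i hin
        rw [hsup.1 u hu i hui]
        exact hui
      obtain ⟨u, hu, hBu⟩ := hopen γ hchain hne v hsup (hBv hDv)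
      exact ⟨u, hu, fun _ => hBu⟩
    · push_neg at hall
      obtain ⟨u, hu, hnd⟩ := hall
      exact ⟨u, hu, fun hd => absurd hd hnd⟩
  exact fun u => hBkI _ hopen'
    (fun u h hD => hstep u hD (fun v hlt hDv => h v (hsub _ _ hlt) hDv)) u
end

section
/- The principle J*₂-shift implies the J-shift over minimal logic. That is, from ∀n, ((A(n) → R) → A(n)) one can derive ∀m n, ((A(m) → R) → A(n)); hence the J*₂-shift yields the J-shift: (∀n, ((A n → R) → A n)) → ((∀n, A n) → R) → ∀n, A n. -/
/-- The J*₂-shift implies the J-shift (over minimal logic). -/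
theorem J2_shift_implies_J_shift (A : ℕ → Prop) (R : Prop)
    (J2 : (∀ m n, ((A m → R) → A n)) → ((∀ n, A n) → R) → ∀ n, A n) :
    (∀ n, ((A n → R) → A n)) → ((∀ n, A n) → R) → ∀ n, A n := by
  intro h hR
  exact J2 (fun m n hm => h n (fun _ => hm (h m hm))) hR
end

section
/- No functional Φ can satisfy the equation Φ(H, s) = H(s, λt. if |t| > |s| then Φ(H, s ⊕ t) else default) for all H and finite sequences s, with output type ℕ. Specifically, instantiating H(s, g) := 1 + g(s * ⟨0⟩) (where s * ⟨0⟩ extends s by one element, so |s * ⟨0⟩| > |s|), any such Φ would satisfy Φ(H, ⟨⟩) = n + 1 + Φ(H, 0⁽ⁿ⁺¹⁾) > n for all n, where 0⁽ⁿ⁺¹⁾ is the all-zero sequence of length n+1 — a contradiction. -/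
/-- No functional `Φ` can satisfy the "length-accessing" implicit bar recursion
equation `Φ(H, s) = H(s, λt. if |t| > |s| then Φ(H, s ⊕ t) else 0)`. -/
theorem no_length_accessing_bar_recursor {ρ : Type*} [Inhabited ρ] :
    ¬ ∃ Φ : (List ρ × (List ρ → ℕ) → ℕ) → List ρ → ℕ,
      ∀ (H : List ρ × (List ρ → ℕ) → ℕ) (s : List ρ),
        Φ H s = H (s, fun t => if s.length < t.length
          then Φ H (s ++ t.drop s.length) else 0) := by
  rintro ⟨Φ, hΦ⟩
  set H : List ρ × (List ρ → ℕ) → ℕ := fun p => 1 + p.2 (p.1 ++ [default]) with hH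
  have key : ∀ s : List ρ, Φ H s = 1 + Φ H (s ++ [default]) := by
    intro s
    rw [hΦ H s]
    simp [hH]
  have step : ∀ n : ℕ, Φ H [] = n + Φ H (List.replicate n default) := by
    intro n
    induction n with
    | zero => simp
    | succ n ih =>
        rw [ih, key (List.replicate n default)]
        have : List.replicate n (default : ρ) ++ [default] =
            List.replicate (n + 1) default := by
          simp [List.replicate_succ']
        rw [this]
        ring
  have := step (Φ H [] + 1)
  omega
end

section
/- Bar induction follows from relativised backward induction with ⊲ = < and ⊏' the update relation: for open predicates B on partial sequences, if B(α) holds for all total α, and for all finite sequences s, (∀x, B((s*x)^) ) → B(ŝ), then B(ŝ) holds for all finite sequences s. Here ŝ denotes the embedding of the finite sequence s as a partial sequence with domain {0,...,|s|−1}. -/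
/-- Bar induction for open predicates, which follows from relativised backward
induction with `⊲ = <` and `⊏'` the update relation. Here the embedding of a
finite sequence `s` as a partial sequence is `fun n => s[n]?`. -/
theorem bar_induction {ρ : Type*} (B : (ℕ → Option ρ) → Prop)
    (hopen : OpenPred B)
    (htotal : ∀ α : ℕ → ρ, B (fun n => some (α n)))
    (hstep : ∀ s : List ρ, (∀ x : ρ, B (fun n => (s ++ [x])[n]?)) →
      B (fun n => s[n]?)) :
    ∀ s : List ρ, B (fun n => s[n]?) := by
  intro s
  by_contra hB
  rcases isEmpty_or_nonempty ρ with hρ | hρ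
  · exact hB (hstep s (fun x => (hρ.false x).elim))
  have hch : ∀ t : {t : List ρ // ¬ B (fun n => t[n]?)},
      ∃ x : ρ, ¬ B (fun n => (t.1 ++ [x])[n]?) := by
    rintro ⟨t, ht⟩
    by_contra h
    push_neg at h
    exact ht (hstep t h)
  choose f hf using hch
  let t : ℕ → {t : List ρ // ¬ B (fun n => t[n]?)} :=
    fun k => Nat.rec ⟨s, hB⟩ (fun _ p => ⟨p.1 ++ [f p], hf p⟩) k
  have hlen : ∀ k, (t k).1.length = s.length + k := by
    intro k
    induction k with
    | zero => rfl
    | succ k ih =>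
      show ((t k).1 ++ [f (t k)]).length = _
      simp [ih]; ring
  have hpre : ∀ k m, k ≤ m → (t k).1 <+: (t m).1 := by
    intro k m hkm
    induction m, hkm using Nat.le_induction with
    | base => exact List.prefix_rfl
    | succ m _ ih => exact ih.trans (List.prefix_append _ _)
  have hget : ∀ k m n, k ≤ m → n < (t k).1.length →
      ((t m).1)[n]? = ((t k).1)[n]? := by
    intro k m n hkm hn
    obtain ⟨r, hr⟩ := hpre k m hkm
    rw [← hr, List.getElem?_append_left hn]
  have hαlt : ∀ n, n < (t (n+1)).1.length := by
    intro n; have := hlen (n+1); omega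
  let α : ℕ → ρ := fun n => ((t (n+1)).1)[n]'(hαlt n)
  have hαget : ∀ n m, n < m → ((t m).1)[n]? = some (α n) := by
    intro n m hnm
    rw [hget (n+1) m n hnm (hαlt n), List.getElem?_eq_getElem (hαlt n)]
  set γ : Set (ℕ → Option ρ) :=
    Set.range (fun k => (fun n => ((t k).1)[n]? : ℕ → Option ρ)) with hγ
  have hchain : IsChain PExt γ := by
    rintro _ ⟨k, rfl⟩ _ ⟨m, rfl⟩ _
    have key : ∀ a b : ℕ, a ≤ b →
        PExt (fun n => ((t a).1)[n]?) (fun n => ((t b).1)[n]?) := by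
      intro a b hab i hi
      have hlt : i < (t a).1.length := by
        by_contra h
        exact hi (List.getElem?_eq_none (le_of_not_gt h))
      exact hget a b i hab hlt
    rcases le_total k m with h | h
    · exact Or.inl (key k m h)
    · exact Or.inr (key m k h)
  have hsup : IsSupOf γ (fun n => some (α n)) := by
    constructor
    · rintro _ ⟨k, rfl⟩ i hi
      have hlt : i < (t k).1.length := by
        by_contra h
        exact hi (List.getElem?_eq_none (le_of_not_gt h))
      have h1 : ((t (max k (i+1))).1)[i]? = ((t k).1)[i]? :=
        hget k _ i (le_max_left _ _) hlt
      have h2 : ((t (max k (i+1))).1)[i]? = some (α i) :=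
        hαget i _ (lt_of_lt_of_le (Nat.lt_succ_self i) (le_max_right _ _))
      show some (α i) = ((t k).1)[i]?
      rw [← h1, h2]
    · intro n _
      refine ⟨fun m => ((t (n+1)).1)[m]?, ⟨n+1, rfl⟩, ?_⟩
      show ((t (n+1)).1)[n]? ≠ none
      rw [hαget n (n+1) (Nat.lt_succ_self n)]
      simp
  obtain ⟨u, ⟨k, rfl⟩, hBu⟩ :=
    hopen γ hchain ⟨_, ⟨0, rfl⟩⟩ _ hsup (htotal α)
  exact (t k).2 hBu
end

section
/- Backward recursion is definable from open recursion: given the open recursor Open satisfying Open^ψ(u) = ψ_u(λ(n,v). if n ∈ dom(v)\dom(u) then Open^ψ((u↾n) ⊕ v) else default), and defining m_{n,u,v} := least i ≤ n with i ∈ dom(v)\dom(u) (else n), and ψ̃_u(f) := ψ_u(λ(n,v). if n ∈ dom(v)\dom(u) then f(m_{n,u,v}, u ⊕ v) else default), the functional BkR^ψ(u) := Open^{ψ̃}(u) satisfies the backward recursion equation BkR^ψ(u) = ψ_u(λ(n,v). if n ∈ dom(v)\dom(u) then BkR^ψ(u ⊕ v) else default). The verification uses: (a) n ∈ dom(v)\dom(u)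 implies m_{n,u,v} ∈ dom(u ⊕ v)\dom(u), and (b) (u↾m_{n,u,v}) ⊕ (u ⊕ v) = u ⊕ v by minimality of m_{n,u,v}. -/
open Classical

/-- Overwrite: `(u ⊕ v) n = u n` if `n ∈ dom u`, else `v n`. -/
def oplus {ρ : Type*} (u v : ℕ → Option ρ) : ℕ → Option ρ :=
  fun n => match u n with
    | some x => some x
    | none => v n

/-- Restriction of a partial sequence to indices `< n`. -/
def restrict {ρ : Type*} (u : ℕ → Option ρ) (n : ℕ) : ℕ → Option ρ :=
  fun i => if i < n then u i else none

/-- `m_{n,u,v}`: the least `i ≤ n` with `i ∈ dom v \ dom u`, defaulting to `n`. -/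
noncomputable def mnuv {ρ : Type*} (n : ℕ) (u v : ℕ → Option ρ) : ℕ :=
  if h : ∃ i, i ≤ n ∧ v i ≠ none ∧ u i = none then Nat.find h else n

/-- The auxiliary functional `ψ̃` used to define backward recursion from open
recursion. -/
noncomputable def tildePsi {ρ τ : Type*} [Inhabited τ]
    (ψ : (ℕ → Option ρ) → (ℕ → (ℕ → Option ρ) → τ) → τ) :
    (ℕ → Option ρ) → (ℕ → (ℕ → Option ρ) → τ) → τ :=
  fun u f => ψ u (fun n v =>
    if v n ≠ none ∧ u n = none then f (mnuv n u v) (oplus u v) else default)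


section Helpers
variable {ρ : Type*}

lemma mnuv_spec {n : ℕ} {u v : ℕ → Option ρ} (hv : v n ≠ none) (hu : u n = none) :
    mnuv n u v ≤ n ∧ v (mnuv n u v) ≠ none ∧ u (mnuv n u v) = none ∧
      ∀ i < mnuv n u v, u i = none → v i = none := by
  have h : ∃ i, i ≤ n ∧ v i ≠ none ∧ u i = none := ⟨n, le_refl n, hv, hu⟩
  rw [mnuv, dif_pos h]
  obtain ⟨h1, h2, h3⟩ := Nat.find_spec h
  refine ⟨h1, h2, h3, fun i hi hui => ?_⟩
  by_contra hvi
  exact absurd (Nat.find_min' h ⟨le_trans (le_of_lt hi) h1, hvi, hui⟩) (not_le.mpr hi)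

lemma lem_a {n : ℕ} {u v : ℕ → Option ρ} (hv : v n ≠ none) (hu : u n = none) :
    (oplus u v) (mnuv n u v) ≠ none ∧ u (mnuv n u v) = none := by
  obtain ⟨-, h2, h3, -⟩ := mnuv_spec hv hu
  refine ⟨?_, h3⟩
  simp [oplus, h3, h2]

lemma lem_b {n : ℕ} {u v : ℕ → Option ρ} (hv : v n ≠ none) (hu : u n = none) :
    oplus (restrict u (mnuv n u v)) (oplus u v) = oplus u v := by
  obtain ⟨-, -, -, hmin⟩ := mnuv_spec hv hu
  funext i
  by_cases hi : i < mnuv n u v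
  · cases hui : u i with
    | some x => simp [oplus, restrict, hi, hui]
    | none => simp [oplus, restrict, hi, hui, hmin i hi hui]
  · simp [oplus, restrict, hi]

end Helpers

/-- Backward recursion is definable from open recursion: the key lemmas (a) and
(b), and the resulting fixed point equation for `BkR^ψ := Open^{ψ̃}`. -/
theorem backward_recursion_from_open_recursion {ρ τ : Type*} [Inhabited τ]
    (OpenRec : ((ℕ → Option ρ) → (ℕ → (ℕ → Option ρ) → τ) → τ) → (ℕ → Option ρ) → τ)
    (hOpen : ∀ ψ u, OpenRec ψ u = ψ u (fun n v =>
      if v n ≠ none ∧ u n = none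
      then OpenRec ψ (oplus (restrict u n) v) else default)) :
    -- (a) the chosen index lies in `dom(u ⊕ v) \ dom u`
    (∀ (n : ℕ) (u v : ℕ → Option ρ), v n ≠ none → u n = none →
      (oplus u v) (mnuv n u v) ≠ none ∧ u (mnuv n u v) = none) ∧
    -- (b) restricting `u` below the chosen index and overwriting with `u ⊕ v`
    --     gives back `u ⊕ v`
    (∀ (n : ℕ) (u v : ℕ → Option ρ), v n ≠ none → u n = none →
      oplus (restrict u (mnuv n u v)) (oplus u v) = oplus u v) ∧
    -- the fixed point equation for `BkR^ψ(u) := OpenRec (ψ̃) u`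
    (∀ (ψ : (ℕ → Option ρ) → (ℕ → (ℕ → Option ρ) → τ) → τ) (u : ℕ → Option ρ),
      OpenRec (tildePsi ψ) u = ψ u (fun n v =>
        if v n ≠ none ∧ u n = none
        then OpenRec (tildePsi ψ) (oplus u v) else default)) := by

  refine ⟨fun n u v hv hu => lem_a hv hu, fun n u v hv hu => lem_b hv hu, fun ψ u => ?_⟩
  rw [hOpen, tildePsi]
  congr 1
  funext n v
  by_cases h : v n ≠ none ∧ u n = none
  · obtain ⟨hv, hu⟩ := h
    rw [if_pos (⟨hv, hu⟩ : v n ≠ none ∧ u n = none), if_pos (lem_a hv hu), lem_b hv hu, if_pos (⟨hv, hu⟩ : v n ≠ none ∧ u n = none)]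
  · rw [if_neg h, if_neg h]
end
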